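/- arXiv:1907.10534 — 4 statements merged into one kernel-verified Lean document; each statement's English description precedes it below -/
import Mathlib

section
/- Every real number x in the interval [-s/(s+1), 1/(s+1)] can be represented as x = Σ_{n=1}^∞ α_n / (-s)^n where each digit α_n belongs to {0,1,...,s-1}. -/
/-!
The interval `I = [-s/(s+1), 1/(s+1)]` has length one and satisfies `-s • I = ⋃_{d<s} (d + I)`.
So from `r₀ = x ∈ I` one can choose digits `α n < s` keeping every remainder
`r (n+1) = -s r n - α n` in `I`. Then `x - ∑_{k<N} α k / (-s)^(k+1) = r N / (-s)^N`,
which tends to zero because the remainders are bounded.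
-/

open Filter Topology Finset

section Expansion

variable {𝕜 : Type*} [NormedField 𝕜] {b : 𝕜} {r a : ℕ → 𝕜}

lemma div_pow_succ_eq_sub_of_eq_mul_sub (hb : b ≠ 0) {n : ℕ} (hr : r (n + 1) = b * r n - a n) :
    a n / b ^ (n + 1) = r n / b ^ n - r (n + 1) / b ^ (n + 1) := by
  rw [hr]
  field_simp
  ring

theorem hasSum_div_pow_of_eq_mul_sub (hb : 1 < ‖b‖) (hr : ∀ n, r (n + 1) = b * r n - a n)
    {C : ℝ} (hC : ∀ n, ‖r n‖ ≤ C) : HasSum (fun n => a n / b ^ (n + 1)) (r 0) := by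
  have hb0 : b ≠ 0 := norm_pos_iff.mp (one_pos.trans hb)
  set g : ℕ → 𝕜 := fun n => r n / b ^ n
  have hterm : (fun n => a n / b ^ (n + 1)) = fun n => g n - g (n + 1) :=
    funext fun n => div_pow_succ_eq_sub_of_eq_mul_sub hb0 (hr n)
  have hg : ∀ n, ‖g n‖ ≤ C * ‖b‖⁻¹ ^ n := fun n => by
    rw [norm_div, norm_pow, div_eq_mul_inv, ← inv_pow]
    exact mul_le_mul_of_nonneg_right (hC n) (by positivity)
  have hg_summable : Summable fun n => ‖g n‖ :=
    ((summable_geometric_of_lt_one (by positivity) (inv_lt_one_of_one_lt₀ hb)).mul_left C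
      ).of_nonneg_of_le (fun _ => norm_nonneg _) hg
  have hg_zero : Tendsto g atTop (𝓝 0) :=
    tendsto_zero_iff_norm_tendsto_zero.mpr hg_summable.tendsto_atTop_zero
  rw [hterm, hasSum_iff_tendsto_nat_of_summable_norm]
  · simp_rw [sum_range_sub']
    simpa [g] using (tendsto_const_nhds (x := g 0)).sub hg_zero
  · exact (hg_summable.add ((summable_nat_add_iff 1).mpr hg_summable)).of_nonneg_of_le
      (fun _ => norm_nonneg _) fun _ => norm_sub_le _ _

end Expansion

lemma exists_nat_le_mem_Icc_add_one {K : Type*} [Field K] [LinearOrder K] [IsStrictOrderedRing K]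
    [FloorSemiring K] {y : K} {n : ℕ} (hy : y ∈ Set.Icc (-1) (n : K)) :
    ∃ d ≤ n, (d : K) ∈ Set.Icc y (y + 1) := by
  refine ⟨⌈y⌉₊, Nat.ceil_le.mpr hy.2, Nat.le_ceil y, ?_⟩
  rcases le_or_gt 0 y with hy0 | hy0
  · exact (Nat.ceil_lt_add_one hy0).le
  · rw [Nat.ceil_eq_zero.mpr hy0.le, Nat.cast_zero]
    linarith [hy.1]

def negaSAdicInterval (s : ℕ) : Set ℝ := Set.Icc (-(s : ℝ) / ((s : ℝ) + 1)) (1 / ((s : ℝ) + 1))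

namespace negaSAdicInterval

variable {s : ℕ} {r : ℝ}

lemma abs_le_one (hr : r ∈ negaSAdicInterval s) : |r| ≤ 1 := by
  have hs : (0 : ℝ) < s + 1 := by positivity
  refine abs_le.mpr ⟨le_trans ?_ hr.1, hr.2.trans ?_⟩
  · rw [le_div_iff₀ hs]
    linarith
  · rw [div_le_one hs]
    linarith [s.cast_nonneg (α := ℝ)]

lemma exists_digit (hs : 0 < s) (hr : r ∈ negaSAdicInterval s) :
    ∃ d < s, -(s : ℝ) * r - d ∈ negaSAdicInterval s := by
  set u : ℝ := 1 / ((s : ℝ) + 1)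
  have hsu : (s : ℝ) * u = 1 - u := by
    simp only [u]
    field_simp
    ring
  have hlow : -(s : ℝ) / ((s : ℝ) + 1) = u - 1 := by
    simp only [u]
    field_simp
    ring
  obtain ⟨hr₁, hr₂⟩ : u - 1 ≤ r ∧ r ≤ u := by rw [← hlow]; exact hr
  have hs₀ : (0 : ℝ) ≤ s := s.cast_nonneg
  obtain ⟨d, hds, hd₁, hd₂⟩ := exists_nat_le_mem_Icc_add_one (K := ℝ) (n := s - 1)
    (y := -s * r - u) ⟨by nlinarith, by rw [Nat.cast_pred hs]; nlinarith⟩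
  refine ⟨d, by omega, ?_⟩
  rw [negaSAdicInterval, hlow]
  constructor <;> linarith

lemma exists_digits_remainders (hs : 0 < s) {x : ℝ} (hx : x ∈ negaSAdicInterval s) :
    ∃ (α : ℕ → ℕ) (r : ℕ → ℝ), (∀ n, α n < s) ∧ (∀ n, r n ∈ negaSAdicInterval s) ∧ r 0 = x ∧
      ∀ n, r (n + 1) = -(s : ℝ) * r n - α n := by
  choose! d hd hmem using fun r (hr : r ∈ negaSAdicInterval s) => exists_digit hs hr
  set T : ℝ → ℝ := fun r => -(s : ℝ) * r - d r
  have hT : ∀ n, T^[n] x ∈ negaSAdicInterval s := fun n =>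
    Set.MapsTo.iterate (f := T) (fun _ hr => hmem _ hr) n hx
  exact ⟨fun n => d (T^[n] x), fun n => T^[n] x, fun n => hd _ (hT n), hT, rfl,
    fun n => Function.iterate_succ_apply' T n x⟩

end negaSAdicInterval

/-- Every `x ∈ [-s/(s+1), 1/(s+1)]` has a nega-s-adic representation
`x = Σ_{n≥1} α_n / (-s)^n` with digits `α_n ∈ {0,…,s-1}`. -/
theorem negaSAdic_representation (s : ℕ) (hs : 1 < s) (x : ℝ)
    (hx : x ∈ Set.Icc (-(s : ℝ) / ((s : ℝ) + 1)) (1 / ((s : ℝ) + 1))) :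
    ∃ α : ℕ → ℕ, (∀ n, α n < s) ∧
      x = ∑' n : ℕ, (α n : ℝ) / (-(s : ℝ)) ^ (n + 1) := by
  obtain ⟨α, r, hα, hrI, rfl, hr⟩ := negaSAdicInterval.exists_digits_remainders (by omega) hx
  have hbase : 1 < ‖-(s : ℝ)‖ := by
    rw [norm_neg, Real.norm_natCast]
    exact_mod_cast hs
  exact ⟨α, hα, (hasSum_div_pow_of_eq_mul_sub (a := fun n => (α n : ℝ)) hbase hr
    fun n => negaSAdicInterval.abs_le_one (hrI n)).tsum_eq.symm⟩
end

section
/- Let N_B be a fixed subset of the positive integers and define ρ_n = 1 if n ∈ N_B and ρ_n = 2 otherwise. Set a'_0 = -Σ_{n ∈ N_B} (s-1)/s^n and a''_0 = 1 + a'_0. Then every real number x in [a'_0, a''_0] admits a representation x = Σ_{n=1}^∞ (-1)^{ρ_n} α_n / s^n with α_n ∈ {0,1,...,s-1}. -/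
open scoped Classical

/-!
Shifting by `T = ∑_{n ∈ N_B} (s-1)/s^n` moves `[a'_0, a''_0]` onto `[0, 1]`, where `x + T` has
an ordinary base-`s` expansion `∑ β_n / s^n`. At a position `n ∈ N_B` the sign is negative, and
the reflected digit `s - 1 - β_n` contributes `-(s - 1 - β_n)/s^n = β_n/s^n - (s-1)/s^n`;
summing over all positions gives `(x + T) - T = x`.
-/

namespace QuasiNegaSAdic

open Real

variable {s : ℕ} [NeZero s] (NB : Set ℕ)

/-- Base-`s` digits of `-a'_0`: the digit `s - 1` at the positions of `N_B`, `0` elsewhere. -/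
noncomputable def offsetDigits : ℕ → Fin s := fun n => if n + 1 ∈ NB then Fin.rev 0 else 0

noncomputable def reflectDigits (β : ℕ → Fin s) : ℕ → Fin s :=
  fun n => if n + 1 ∈ NB then (β n).rev else β n

theorem ofDigitsTerm_offsetDigits (n : ℕ) :
    ofDigitsTerm (offsetDigits (s := s) NB) n =
      Set.indicator NB (fun m => ((s : ℝ) - 1) / (s : ℝ) ^ m) (n + 1) := by
  by_cases hn : n + 1 ∈ NB
  · have hs : 1 ≤ s := NeZero.one_le
    simp [ofDigitsTerm, offsetDigits, hn, Nat.cast_sub hs, div_eq_mul_inv]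
  · simp [ofDigitsTerm, offsetDigits, hn]

theorem signed_ofDigitsTerm_reflectDigits (β : ℕ → Fin s) (n : ℕ) :
    (-1 : ℝ) ^ (if n + 1 ∈ NB then 1 else 2) * ((reflectDigits NB β n : ℕ) : ℝ) /
        (s : ℝ) ^ (n + 1)
      = ofDigitsTerm β n - ofDigitsTerm (offsetDigits (s := s) NB) n := by
  by_cases hn : n + 1 ∈ NB
  · have hβ : (β n : ℕ) + 1 ≤ s := (β n).is_lt
    simp only [reflectDigits, offsetDigits, ofDigitsTerm, hn, if_true, Fin.val_rev,
      Fin.val_zero, Nat.cast_sub hβ, Nat.cast_sub (NeZero.one_le : 1 ≤ s)]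
    push_cast
    ring
  · simp [reflectDigits, offsetDigits, ofDigitsTerm, hn, div_eq_mul_inv]

end QuasiNegaSAdic

open QuasiNegaSAdic Real in
theorem quasiNegaSAdic_representation_general (s : ℕ) (hs : 1 < s) (NB : Set ℕ)
    (x : ℝ)
    (hx : x ∈ Set.Icc
      (-(∑' n : ℕ, Set.indicator NB (fun m => ((s : ℝ) - 1) / (s : ℝ) ^ m) (n + 1)))
      (1 + -(∑' n : ℕ, Set.indicator NB (fun m => ((s : ℝ) - 1) / (s : ℝ) ^ m) (n + 1)))) :
    ∃ α : ℕ → ℕ, (∀ n, α n < s) ∧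
      x = ∑' n : ℕ,
        (-1 : ℝ) ^ (if (n + 1) ∈ NB then 1 else 2) * (α n : ℝ) / (s : ℝ) ^ (n + 1) := by
  have : NeZero s := ⟨by omega⟩
  have hoffset : ∑' n : ℕ, Set.indicator NB (fun m => ((s : ℝ) - 1) / (s : ℝ) ^ m) (n + 1) =
      ofDigits (offsetDigits (s := s) NB) :=
    tsum_congr fun n => (ofDigitsTerm_offsetDigits NB n).symm
  rw [hoffset] at hx
  have hshift : x + ofDigits (offsetDigits (s := s) NB) ∈ Set.Icc 0 1 := by
    constructor <;> linarith [hx.1, hx.2]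
  obtain ⟨β, -, hβ⟩ := ofDigits_SurjOn hs hshift
  refine ⟨fun n => (reflectDigits NB β n : ℕ), fun n => Fin.is_lt _, ?_⟩
  rw [tsum_congr (signed_ofDigitsTerm_reflectDigits NB β),
    Summable.tsum_sub summable_ofDigitsTerm summable_ofDigitsTerm]
  change x = ofDigits β - ofDigits (offsetDigits NB)
  linarith

/-- Quasi-nega-s-adic representation: with `ρ_n = 1` for `n ∈ N_B` and `ρ_n = 2`
otherwise, every `x ∈ [a'_0, a''_0]`, where `a'_0 = -Σ_{n∈N_B} (s-1)/s^n` and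
`a''_0 = 1 + a'_0`, can be written as `x = Σ_{n≥1} (-1)^{ρ_n} α_n / s^n` with
digits `α_n ∈ {0,…,s-1}`. Position `n+1` corresponds to index `n : ℕ`. -/
theorem quasiNegaSAdic_representation (s : ℕ) (hs : 1 < s) (NB : Set ℕ)
    (hNB : ∀ n ∈ NB, 1 ≤ n) (x : ℝ)
    (hx : x ∈ Set.Icc
      (-(∑' n : ℕ, Set.indicator NB (fun m => ((s : ℝ) - 1) / (s : ℝ) ^ m) (n + 1)))
      (1 + -(∑' n : ℕ, Set.indicator NB (fun m => ((s : ℝ) - 1) / (s : ℝ) ^ m) (n + 1)))) :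
    ∃ α : ℕ → ℕ, (∀ n, α n < s) ∧
      x = ∑' n : ℕ,
        (-1 : ℝ) ^ (if (n + 1) ∈ NB then 1 else 2) * (α n : ℝ) / (s : ℝ) ^ (n + 1) :=
  quasiNegaSAdic_representation_general s hs NB x hx
end

section
/- Let (k_n) be a sequence of positive integers and for each n let θ_n : {0,1}^{k_n} → {0,1}^{k_n} be a bijection. Define f : [0,1] → [0,1] on binary expansions by applying θ_n to the n-th consecutive block of k_n binary digits and reading the result as a binary expansion. Then f is surjective: every y ∈ [0,1] has a pseudo-binary representation, i.e., y = Σ_{j=1}^∞ β_j/2^j where the blocks (β_{k_1+...+k_{n-1}+1},...,β_{k_1+...+k_n}) = θ_n(α_{k_1+...+k_{n-1}+1},...,α_{k_1+...+k_n}) for some binary digit sequence (α_j). -/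
/-! Take any binary expansion `β` of `y`. Since each `θ_n` is onto, every block of `β` has a
`θ_n`-preimage, and since the blocks of indices are disjoint, these preimages glue to a single
digit sequence `α`. -/

/-- `blockStart k n = k_1 + … + k_n`, the index where the `n`-th block begins. -/
def blockStart (k : ℕ → ℕ) (n : ℕ) : ℕ := ∑ i ∈ Finset.range n, k i

lemma blockStart_succ (k : ℕ → ℕ) (n : ℕ) : blockStart k (n + 1) = blockStart k n + k n :=
  Finset.sum_range_succ k n

lemma blockStart_mono (k : ℕ → ℕ) : Monotone (blockStart k) :=
  fun _ _ hnm => Finset.sum_le_sum_of_subset (Finset.range_subset_range.mpr hnm)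

lemma blockStart_add_lt_of_lt (k : ℕ → ℕ) {n m : ℕ} (hnm : n < m) (i : Fin (k n)) (j : ℕ) :
    blockStart k n + i < blockStart k m + j :=
  calc blockStart k n + i < blockStart k (n + 1) := by rw [blockStart_succ]; omega
    _ ≤ blockStart k m := blockStart_mono k hnm
    _ ≤ blockStart k m + j := Nat.le_add_right _ _

lemma blockStart_add_injective (k : ℕ → ℕ) :
    Function.Injective fun p : Σ n, Fin (k n) => blockStart k p.1 + p.2 := by
  rintro ⟨n, i⟩ ⟨m, j⟩ h
  simp only at h
  obtain hnm | rfl | hmn := lt_trichotomy n m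
  · exact absurd h (blockStart_add_lt_of_lt k hnm i j).ne
  · rw [Fin.val_inj.mp (Nat.add_left_cancel h)]
  · exact absurd h (blockStart_add_lt_of_lt k hmn j i).ne'

lemma exists_seq_blocks_eq {X : Type*} [Nonempty X] (k : ℕ → ℕ) (g : ∀ n, Fin (k n) → X) :
    ∃ a : ℕ → X, ∀ n (i : Fin (k n)), a (blockStart k n + i) = g n i :=
  ⟨Function.extend (fun p : Σ n, Fin (k n) => blockStart k p.1 + p.2) (fun p => g p.1 p.2)
      fun _ => Classical.arbitrary X,
    fun n i => (blockStart_add_injective k).extend_apply _ _ ⟨n, i⟩⟩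

lemma exists_binary_expansion {y : ℝ} (hy : y ∈ Set.Icc (0 : ℝ) 1) :
    ∃ β : ℕ → Fin 2, y = ∑' j : ℕ, ((β j : ℕ) : ℝ) / 2 ^ (j + 1) := by
  obtain ⟨β, -, rfl⟩ := Real.ofDigits_SurjOn (b := 2) one_lt_two hy
  exact ⟨β, by simp [Real.ofDigits, Real.ofDigitsTerm, div_eq_mul_inv]⟩

theorem pseudoBinary_representation_general (k : ℕ → ℕ)
    (θ : ∀ n, (Fin (k n) → Fin 2) → (Fin (k n) → Fin 2))
    (hθ : ∀ n, Function.Bijective (θ n))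
    (y : ℝ) (hy : y ∈ Set.Icc (0 : ℝ) 1) :
    ∃ α β : ℕ → Fin 2,
      (∀ n : ℕ, ∀ i : Fin (k n),
        β (blockStart k n + i) = θ n (fun i => α (blockStart k n + i)) i) ∧
      y = ∑' j : ℕ, ((β j : ℕ) : ℝ) / 2 ^ (j + 1) := by
  obtain ⟨β, hβ⟩ := exists_binary_expansion hy
  choose preimage hpreimage using fun n => (hθ n).surjective fun i => β (blockStart k n + i)
  obtain ⟨α, hα⟩ := exists_seq_blocks_eq k preimage
  refine ⟨α, β, fun n i => ?_, hβ⟩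
  simp only [hα, hpreimage]

/-- Surjectivity of the pseudo-binary numeral system: given block lengths `(k_n)`
and block bijections `θ_n : {0,1}^{k_n} → {0,1}^{k_n}`, every `y ∈ [0,1]` has a
pseudo-binary representation `y = Σ_{j≥1} β_j/2^j` where each block of `(β_j)` is
the `θ_n`-image of the corresponding block of some binary sequence `(α_j)`. -/
theorem pseudoBinary_representation (k : ℕ → ℕ) (hk : ∀ n, 0 < k n)
    (θ : ∀ n, (Fin (k n) → Fin 2) → (Fin (k n) → Fin 2))
    (hθ : ∀ n, Function.Bijective (θ n))
    (y : ℝ) (hy : y ∈ Set.Icc (0 : ℝ) 1) :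
    ∃ α β : ℕ → Fin 2,
      (∀ n : ℕ, ∀ i : Fin (k n),
        β (blockStart k n + i) = θ n (fun i => α (blockStart k n + i)) i) ∧
      y = ∑' j : ℕ, ((β j : ℕ) : ℝ) / 2 ^ (j + 1) :=
  pseudoBinary_representation_general k θ hθ y hy
end

section
/- Let (k_n) be a sequence of positive integers and θ_n : {0,1}^{k_n} → {0,1}^{k_n} bijections, and f the corresponding block-permutation map on binary expansions. Then the Lebesgue integral ∫_0^1 f(x) dλ(x) equals 1/2. -/
/-- The `j`-th binary digit of `x` (period-(0) convention for binary rationals). -/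
noncomputable def bDigit (x : ℝ) (j : ℕ) : Fin 2 :=
  ⟨(⌊x * 2 ^ (j + 1)⌋).toNat % 2, Nat.mod_lt _ (by norm_num)⟩

/-- The index of the block containing position `j`. -/
def blockOf (k : ℕ → ℕ) (j : ℕ) : ℕ :=
  Nat.findGreatest (fun m => blockStart k m ≤ j) j

/-- The pseudo-binary block-permutation map `f` determined by block lengths
`(k_n)` and block bijections `(θ_n)`: it applies `θ_n` to the `n`-th block of
`k_n` binary digits of `x` and reads off the resulting binary expansion
(`1` is sent to `1`). -/
noncomputable def pseudoF (k : ℕ → ℕ)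
    (θ : ∀ n, (Fin (k n) → Fin 2) → (Fin (k n) → Fin 2)) (x : ℝ) : ℝ :=
  if x = 1 then 1 else
    ∑' j : ℕ,
      if h : j - blockStart k (blockOf k j) < k (blockOf k j) then
        (((θ (blockOf k j)
            (fun i => bDigit x (blockStart k (blockOf k j) + i))
            ⟨j - blockStart k (blockOf k j), h⟩ : Fin 2) : ℕ) : ℝ) / 2 ^ (j + 1)
      else 0

open MeasureTheory

/-!
Off the null set `{1}`, `f = ∑ⱼ gⱼ` with `gⱼ x = βⱼ / 2 ^ (j + 1)`, where the digit `βⱼ` is a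
fixed coordinate of `θₙ` applied to the `n`-th digit block of `x`, `n` being the block that
contains position `j`. That block, like every finite set of leading
binary digits, depends only on `⌊2 ^ N x⌋` and hence is constant on the dyadic intervals of
length `2 ^ (-N)`; as `x` runs through them, the block runs through every pattern equally often.
So `∫ gⱼ` is `2 ^ (-(j + 1))` times the mean over all patterns `v` of a coordinate of `θₙ v`, which
by bijectivity is the mean of a coordinate of `v`, namely `1 / 2`. Summing `2 ^ (-(j + 2))` over
`j` gives `1 / 2`.
-/

open Set

section Blocks

variable {k : ℕ → ℕ}

theorem self_le_blockStart (hk : ∀ n, 0 < k n) (m : ℕ) : m ≤ blockStart k m := by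
  simpa [blockStart] using Finset.card_nsmul_le_sum (Finset.range m) k 1 fun i _ => hk i

theorem blockStart_blockOf_le (k : ℕ → ℕ) (j : ℕ) : blockStart k (blockOf k j) ≤ j :=
  Nat.findGreatest_spec (P := fun m => blockStart k m ≤ j) (Nat.zero_le j) (by simp [blockStart])

theorem sub_blockStart_blockOf_lt (hk : ∀ n, 0 < k n) (j : ℕ) :
    j - blockStart k (blockOf k j) < k (blockOf k j) := by
  have hnext : ¬ blockStart k (blockOf k j + 1) ≤ j := fun hle =>
    (Nat.le_findGreatest ((self_le_blockStart hk _).trans hle) hle).not_gt (Nat.lt_succ_self _)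
  have hsucc : blockStart k (blockOf k j + 1) = blockStart k (blockOf k j) + k (blockOf k j) :=
    Finset.sum_range_succ k _
  have := blockStart_blockOf_le k j
  omega

end Blocks

section Digits

/-- The last `m` binary digits of `t`, most significant first. -/
def lowBits (m t : ℕ) : Fin m → Fin 2 :=
  fun i => ⟨t / 2 ^ (m - 1 - i) % 2, Nat.mod_lt _ two_pos⟩

theorem bDigit_val_eq (x : ℝ) {j N : ℕ} (hj : j < N) :
    (bDigit x j : ℕ) = ⌊x * 2 ^ N⌋₊ / 2 ^ (N - 1 - j) % 2 := by
  have hpow : x * 2 ^ N / (2 ^ (N - 1 - j) : ℕ) = x * 2 ^ (j + 1) := by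
    rw [Nat.cast_pow, Nat.cast_ofNat, div_eq_iff (by positivity), mul_assoc, ← pow_add]
    congr 2
    omega
  rw [← Nat.floor_div_natCast, hpow, ← Int.floor_toNat]
  rfl

theorem bDigit_block_eq_lowBits (x : ℝ) (s m : ℕ) :
    (fun i : Fin m => bDigit x (s + i)) = lowBits m ⌊x * 2 ^ (s + m)⌋₊ := by
  funext i
  ext
  rw [bDigit_val_eq x (N := s + m) (by omega), lowBits]
  congr 3
  omega

theorem lowBits_add_two_pow_mul (m a b : ℕ) : lowBits m (b + 2 ^ m * a) = lowBits m b := by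
  funext i
  ext
  have hm : 2 ^ m = 2 ^ (m - 1 - i) * 2 * 2 ^ (m - 1 - (m - 1 - i)) := by
    rw [← pow_succ, ← pow_add]
    congr 1
    omega
  simp only [lowBits, hm, mul_assoc, Nat.add_mul_div_left _ _ (by positivity : 0 < 2 ^ (m - 1 - i)),
    Nat.add_mul_mod_self_left]

theorem lowBits_eq_finFunctionFinEquiv_symm {m b : ℕ} (hb : b < 2 ^ m) :
    lowBits m b = finFunctionFinEquiv.symm ⟨b, hb⟩ ∘ Fin.rev := by
  funext i
  ext
  simp [lowBits, Fin.val_rev, Nat.sub_sub, add_comm]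

theorem sum_range_lowBits {M : Type*} [AddCommMonoid M] (s m : ℕ) (G : (Fin m → Fin 2) → M) :
    ∑ t ∈ Finset.range (2 ^ (s + m)), G (lowBits m t) = 2 ^ s • ∑ v, G v := by
  rw [Nat.pow_add, Finset.sum_range, ← finProdFinEquiv.sum_comp, Fintype.sum_prod_type]
  simp only [finProdFinEquiv_apply_val, lowBits_add_two_pow_mul, Finset.sum_const,
    Finset.card_univ, Fintype.card_fin]
  congr 1
  simp only [fun b : Fin (2 ^ m) => lowBits_eq_finFunctionFinEquiv_symm b.isLt, Fin.eta]
  rw [finFunctionFinEquiv.symm.sum_comp (fun v => G (v ∘ Fin.rev))]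
  exact (Equiv.arrowCongr Fin.revPerm (Equiv.refl _)).sum_comp G

theorem sum_binary_tuple_apply (m : ℕ) (i : Fin m) :
    ∑ v : Fin m → Fin 2, ((v i : ℕ) : ℝ) = 2 ^ m / 2 := by
  obtain ⟨n, rfl⟩ : ∃ n, m = n + 1 := Nat.exists_eq_add_one.mpr i.pos
  rw [← (Fin.insertNthEquiv (fun _ => Fin 2) i).sum_comp, Fintype.sum_prod_type]
  simp [Fin.sum_univ_two, pow_succ]

end Digits

section Integrals

variable {E : Type*} [NormedAddCommGroup E]

theorem intervalIntegrable_comp_natFloor (F : ℕ → E) (t : ℕ) :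
    IntervalIntegrable (fun y : ℝ => F ⌊y⌋₊) volume t (t + 1 : ℕ) := by
  rw [intervalIntegrable_iff_integrableOn_Ico_of_le (by simp)]
  refine (integrableOn_const (C := F t) (by simp)).congr_fun (fun y hy => ?_) measurableSet_Ico
  simp only [Nat.floor_eq_on_Ico t y (by simpa using hy)]

variable [NormedSpace ℝ E] [CompleteSpace E]

theorem intervalIntegral_comp_natFloor (F : ℕ → E) (t : ℕ) :
    ∫ y in (t : ℝ)..(t + 1 : ℕ), F ⌊y⌋₊ = F t := by
  rw [intervalIntegral.integral_of_le (by simp), ← integral_Ico_eq_integral_Ioc,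
    setIntegral_congr_fun measurableSet_Ico (g := fun _ => F t)
      (fun y hy => by simp only [Nat.floor_eq_on_Ico t y (by simpa using hy)]), setIntegral_const]
  simp

theorem intervalIntegral_comp_natFloor_mul (F : ℕ → E) {N : ℕ} (hN : 0 < N) :
    ∫ x in (0 : ℝ)..1, F ⌊x * N⌋₊ = (N : ℝ)⁻¹ • ∑ t ∈ Finset.range N, F t := by
  rw [intervalIntegral.integral_comp_mul_right (fun y => F ⌊y⌋₊) (by positivity), zero_mul,
    one_mul, ← Nat.cast_zero,
    ← intervalIntegral.sum_integral_adjacent_intervals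
      (fun t _ => intervalIntegrable_comp_natFloor F t)]
  simp_rw [intervalIntegral_comp_natFloor]

theorem setIntegral_Icc_bDigit_block (s m : ℕ) (G : (Fin m → Fin 2) → E) :
    ∫ x in Icc (0 : ℝ) 1, G (fun i => bDigit x (s + i)) = (2 ^ m : ℝ)⁻¹ • ∑ v, G v := by
  have h := intervalIntegral_comp_natFloor_mul (fun t => G (lowBits m t))
    (N := 2 ^ (s + m)) (by positivity)
  push_cast at h
  rw [integral_Icc_eq_integral_Ioc, ← intervalIntegral.integral_of_le zero_le_one]
  simp_rw [bDigit_block_eq_lowBits]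
  rw [h, sum_range_lowBits, ← Nat.cast_smul_eq_nsmul ℝ, smul_smul, pow_add]
  congr 1
  push_cast
  field_simp

end Integrals

section Series

variable (k : ℕ → ℕ) (θ : ∀ n, (Fin (k n) → Fin 2) → (Fin (k n) → Fin 2))

noncomputable def pseudoFTerm (j : ℕ) (x : ℝ) : ℝ :=
  if h : j - blockStart k (blockOf k j) < k (blockOf k j) then
    (((θ (blockOf k j)
        (fun i => bDigit x (blockStart k (blockOf k j) + i))
        ⟨j - blockStart k (blockOf k j), h⟩ : Fin 2) : ℕ) : ℝ) / 2 ^ (j + 1)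
  else 0

theorem pseudoF_eq_tsum {x : ℝ} (hx : x ≠ 1) : pseudoF k θ x = ∑' j, pseudoFTerm k θ j x :=
  if_neg hx

theorem pseudoFTerm_nonneg (j : ℕ) (x : ℝ) : 0 ≤ pseudoFTerm k θ j x := by
  unfold pseudoFTerm
  split_ifs <;> positivity

variable {k θ}

theorem integral_pseudoFTerm (hk : ∀ n, 0 < k n) (hθ : ∀ n, Function.Bijective (θ n)) (j : ℕ) :
    ∫ x in Icc (0 : ℝ) 1, pseudoFTerm k θ j x = 1 / 2 ^ (j + 2) := by
  have hj := sub_blockStart_blockOf_lt hk j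
  simp only [pseudoFTerm, dif_pos hj]
  rw [integral_div, setIntegral_Icc_bDigit_block _ _
      (fun v => (((θ (blockOf k j) v ⟨_, hj⟩ : Fin 2) : ℕ) : ℝ)),
    (hθ _).sum_comp (fun w => (((w ⟨_, hj⟩ : Fin 2) : ℕ) : ℝ)), sum_binary_tuple_apply, smul_eq_mul]
  field_simp
  ring

end Series

/-- The Lebesgue integral of the block-permutation map `f` over `[0,1]`
equals `1/2`. -/
theorem pseudoF_integral_eq_half (k : ℕ → ℕ) (hk : ∀ n, 0 < k n)
    (θ : ∀ n, (Fin (k n) → Fin 2) → (Fin (k n) → Fin 2))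
    (hθ : ∀ n, Function.Bijective (θ n)) :
    ∫ x in Set.Icc (0 : ℝ) 1, pseudoF k θ x = 1 / 2 := by
  have hterm := integral_pseudoFTerm hk hθ
  have hint (j : ℕ) : IntegrableOn (pseudoFTerm k θ j) (Icc 0 1) :=
    .of_integral_ne_zero (by rw [hterm]; positivity)
  have hnorm (j : ℕ) : ∫ x in Icc (0 : ℝ) 1, ‖pseudoFTerm k θ j x‖ = 1 / 2 ^ (j + 2) := by
    simp_rw [Real.norm_of_nonneg (pseudoFTerm_nonneg k θ j _), hterm]
  have hgeom : HasSum (fun j : ℕ => 1 / (2 : ℝ) ^ (j + 2)) (1 / 2) := by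
    convert hasSum_geometric_two' (1 / 2 : ℝ) using 1
    funext j
    ring
  calc ∫ x in Icc (0 : ℝ) 1, pseudoF k θ x
      = ∫ x in Icc (0 : ℝ) 1, ∑' j, pseudoFTerm k θ j x :=
        integral_congr_ae ((Measure.ae_ne _ 1).mono fun x hx => pseudoF_eq_tsum k θ hx)
    _ = ∑' j, ∫ x in Icc (0 : ℝ) 1, pseudoFTerm k θ j x :=
        (integral_tsum_of_summable_integral_norm hint
          (by simpa only [hnorm] using hgeom.summable)).symm
    _ = 1 / 2 := by simpa only [hterm] using hgeom.tsum_eq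
end
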